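/- arXiv:2505.08624 — 3 statements merged into one kernel-verified Lean document; each statement's English description precedes it below -/
import Mathlib

section
/- Let n ≥ 5 and θ = (θ_x, θ_1, ..., θ_5, θ_y) ∈ ℤ^7 (n = 5 case). Let 𝓘 = {I ⊆ {1,...,5} : {1,2} ⊆ I or {3,4,5} ⊆ I} and 𝓙 = {J ⊆ {1,...,5} : J ∩ {1,2} ≠ ∅ and J ∩ {3,4,5} ≠ ∅}. Suppose θ_x + θ_1 + ... + θ_5 + θ_y = 0, θ_i ≤ 0 for all i ∈ {1,...,5}, θ_x + Σ_{i∈I} θ_i ≤ 0 for all I ∈ 𝓘, and θ_y + Σ_{j∈J} θ_j ≤ 0 for all J ∈ 𝓙. Then θ = 0. -/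
/-!
Split the arms of the star into `A = {1, 2}` and `B = {3, 4, 5}`. For `k ∈ B`, the source
inequalities for `A` and `B` together with the sink inequalities for `{u, p}` and the complement
of `{k, u, p}` (`u ∈ A`, `p ∈ B \ {k}`) cover every coordinate twice except `θ_k`, which they
miss; since the total sum vanishes this forces `θ_k ≥ 0`, so `θ` vanishes on `B`. Then the
source inequality for `B` and the sink inequality for everything give `θ_x = 0`, and comparing
`θ_y = -∑_{i ∈ A} θ_i` with the sink inequalities for the pairs `{v, q}` (`v ∈ A`, `q ∈ B`)
kills `θ` on `A`, whence also `θ_y = 0`.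
-/

open Finset

variable {ι : Type*} [Fintype ι] [DecidableEq ι]

/-- The paper's `θ_x`, `θ_y`, `θ_i` are `x`, `y`, `a i`; the families `𝓘` and `𝓙` are described
through the split of the arms into `A` and `Aᶜ`. -/
structure SatisfiesStarInequalities (A : Finset ι) (x y : ℤ) (a : ι → ℤ) : Prop where
  sum_eq_zero : x + ∑ i, a i + y = 0
  nonpos : ∀ i, a i ≤ 0
  source_le : ∀ I : Finset ι, A ⊆ I ∨ Aᶜ ⊆ I → x + ∑ i ∈ I, a i ≤ 0
  sink_le : ∀ J : Finset ι, (J ∩ A).Nonempty → (J ∩ Aᶜ).Nonempty → y + ∑ i ∈ J, a i ≤ 0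

namespace SatisfiesStarInequalities

variable {A : Finset ι} {x y : ℤ} {a : ι → ℤ}

theorem sink_pair_le (h : SatisfiesStarInequalities A x y a) {u v : ι} (hu : u ∈ A)
    (hv : v ∉ A) : y + a u + a v ≤ 0 := by
  have := h.sink_le {u, v} ⟨u, by simp [hu]⟩ ⟨v, by simp [hv]⟩
  rwa [sum_pair (ne_of_mem_of_not_mem hu hv), ← add_assoc] at this

theorem eq_zero_of_notMem (h : SatisfiesStarInequalities A x y a) (hA : 2 ≤ #A)
    (hAc : 3 ≤ #Aᶜ) {k : ι} (hk : k ∉ A) : a k = 0 := by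
  obtain ⟨u, hu, v, hv, hvu⟩ := one_lt_card.1 (show 1 < #A by omega)
  obtain ⟨p, hp, hpk⟩ := exists_mem_ne (show 1 < #Aᶜ by omega) k
  obtain ⟨q, hq, hqkp⟩ := exists_mem_notMem_of_card_lt_card
    (show #{k, p} < #Aᶜ from card_le_two.trans_lt (by omega))
  rw [mem_compl] at hp hq
  have hkup : k ∉ ({u, p} : Finset ι) := by simp [(ne_of_mem_of_not_mem hu hk).symm, hpk.symm]
  have hrest := h.sink_le {k, u, p}ᶜ
    ⟨v, by simp [hv, hvu.symm, ne_of_mem_of_not_mem hv hk, ne_of_mem_of_not_mem hv hp]⟩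
    ⟨q, by simp_all⟩
  have hsplit := sum_add_sum_compl ({k, u, p} : Finset ι) a
  rw [sum_insert hkup, sum_pair (ne_of_mem_of_not_mem hu hp)] at hsplit
  have hsourceA := h.source_le A (Or.inl subset_rfl)
  have hsourceAc := h.source_le Aᶜ (Or.inr subset_rfl)
  -- twice the total sum is `a k` plus the left-hand sides of the source inequalities for `A`,
  -- `Aᶜ` and the sink inequalities for `{u, p}`, `{k, u, p}ᶜ`
  linarith [h.sum_eq_zero, h.nonpos k, h.sink_pair_le hu hp, sum_add_sum_compl A a]

theorem sum_compl_eq_zero (h : SatisfiesStarInequalities A x y a) (hA : 2 ≤ #A)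
    (hAc : 3 ≤ #Aᶜ) : ∑ i ∈ Aᶜ, a i = 0 :=
  Finset.sum_eq_zero fun _ hk => h.eq_zero_of_notMem hA hAc (mem_compl.1 hk)

theorem source_eq_zero (h : SatisfiesStarInequalities A x y a) (hA : 2 ≤ #A)
    (hAc : 3 ≤ #Aᶜ) : x = 0 := by
  obtain ⟨u, hu⟩ := card_pos.1 (show 0 < #A by omega)
  obtain ⟨q, hq⟩ := card_pos.1 (show 0 < #Aᶜ by omega)
  have hall := h.sink_le univ ⟨u, by simpa⟩ ⟨q, by simpa using hq⟩
  linarith [h.sum_eq_zero, h.source_le Aᶜ (Or.inr subset_rfl), h.sum_compl_eq_zero hA hAc]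

theorem eq_zero_of_mem (h : SatisfiesStarInequalities A x y a) (hA : 2 ≤ #A)
    (hAc : 3 ≤ #Aᶜ) {u : ι} (hu : u ∈ A) : a u = 0 := by
  obtain ⟨v, hv, hvu⟩ := exists_mem_ne (show 1 < #A by omega) u
  obtain ⟨q, hq⟩ := card_pos.1 (show 0 < #Aᶜ by omega)
  rw [mem_compl] at hq
  have hpair := sum_sdiff (insert_subset hu (singleton_subset_iff.2 hv)) (f := a)
  rw [sum_pair hvu.symm] at hpair
  have hrest : ∑ i ∈ A \ {u, v}, a i ≤ 0 := sum_nonpos fun i _ => h.nonpos i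
  -- `y = -∑_{i ∈ A} a i ≥ -a u - a v`, while the sink inequality for `{v, q}` gives `y ≤ -a v`
  linarith [h.sum_eq_zero, sum_add_sum_compl A a, h.sum_compl_eq_zero hA hAc,
    h.source_eq_zero hA hAc, h.sink_pair_le hv hq, h.eq_zero_of_notMem hA hAc hq, h.nonpos u]

theorem eq_zero (h : SatisfiesStarInequalities A x y a) (hA : 2 ≤ #A) (hAc : 3 ≤ #Aᶜ) :
    x = 0 ∧ y = 0 ∧ a = 0 := by
  have ha : a = 0 := funext fun i => by
    by_cases hi : i ∈ A
    · exact h.eq_zero_of_mem hA hAc hi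
    · exact h.eq_zero_of_notMem hA hAc hi
  have hx := h.source_eq_zero hA hAc
  refine ⟨hx, ?_, ha⟩
  simpa [hx, ha] using h.sum_eq_zero

end SatisfiesStarInequalities

-- Index `0` of `Fin 7` is `x`, index `6` is `y`, and arm `i : Fin 5` sits at index `i + 1`.
/-- Five-pointed star lemma: coordinates of `θ ∈ ℤ^7` indexed by `{x,1,...,5,y}`,
with `x = 0`, vertex `i` at index `i` (via `Fin 5 → Fin 7`, `i ↦ i + 1`), `y = 6`.
If `θ` sums to zero, `θ_i ≤ 0` for `i ∈ {1,...,5}`,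
`θ_x + Σ_{i ∈ I} θ_i ≤ 0` for all `I ∈ 𝓘 = {I : {1,2} ⊆ I or {3,4,5} ⊆ I}`, and
`θ_y + Σ_{j ∈ J} θ_j ≤ 0` for all `J ∈ 𝓙 = {J : J ∩ {1,2} ≠ ∅ and J ∩ {3,4,5} ≠ ∅}`,
then `θ = 0`.  (Subsets of `{1,...,5}` are `Finset (Fin 5)`, where `0,1` correspond to
vertices `1,2` and `2,3,4` to vertices `3,4,5`.) -/
theorem stmt3 (θ : Fin 7 → ℤ)
    (hsum : ∑ v, θ v = 0)
    (hneg : ∀ i : Fin 5, θ i.succ.castSucc ≤ 0)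
    (hI : ∀ I : Finset (Fin 5),
      (({0, 1} : Finset (Fin 5)) ⊆ I ∨ ({2, 3, 4} : Finset (Fin 5)) ⊆ I) →
      θ 0 + ∑ i ∈ I, θ i.succ.castSucc ≤ 0)
    (hJ : ∀ J : Finset (Fin 5),
      ((J ∩ ({0, 1} : Finset (Fin 5))).Nonempty ∧
        (J ∩ ({2, 3, 4} : Finset (Fin 5))).Nonempty) →
      θ 6 + ∑ i ∈ J, θ i.succ.castSucc ≤ 0) :
    θ = 0 := by
  have hcompl : ({0, 1}ᶜ : Finset (Fin 5)) = {2, 3, 4} := by decide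
  have h : SatisfiesStarInequalities ({0, 1} : Finset (Fin 5)) (θ 0) (θ 6)
      fun i => θ i.succ.castSucc :=
    { sum_eq_zero := by simpa [Fin.sum_univ_castSucc, Fin.sum_univ_succ, add_assoc] using hsum
      nonpos := hneg
      source_le := fun I hI' => hI I (hcompl ▸ hI')
      sink_le := fun J hJA hJB => hJ J ⟨hJA, hcompl ▸ hJB⟩ }
  obtain ⟨hx, hy, ha⟩ := h.eq_zero (by decide) (by decide)
  ext v
  cases v using Fin.lastCases with
  | last => exact hy
  | cast w =>
    cases w using Fin.cases with
    | zero => exact hx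
    | succ j => exact congrFun ha j
end

section
/- Fix n ≥ 4 and 2 ≤ m ≤ n-2 with 2m ≤ n. For each m-element subset I ⊆ {1,...,n}, let s(I) be an independent uniformly random element of {+,-}. Let M := (1/2)·binomial(2m, m). Then the probability that there is NO partition {1,...,2m} = I₁ ⊔ I₂ into two m-element sets with s(I₁) = s(I₂) = + is at most (3/4)^M. -/
/-!
The `m`-subsets of `S = {0, …, 2m-1}` containing `0` pair off with their complements in `S` into
`binomial(2m, m) / 2` pairs, and all the sets occurring in these pairs are distinct. A sign
assignment with no `(+, +)`-partition of `S` avoids `(+, +)` on every such pair; since the pairs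
involve disjoint sets of coordinates, each contributes an independent factor `3/4`.
-/

open Finset Function

section SignPairs

variable {ι κ : Type*} [Fintype ι] [DecidableEq ι] [Fintype κ]

theorem card_filter_forall_not_and_le (f g : κ → ι) (hfg : Injective (Sum.elim f g)) :
    #{s : ι → Bool | ∀ k, ¬(s (f k) = true ∧ s (g k) = true)} ≤
      3 ^ Fintype.card κ * 2 ^ (Fintype.card ι - 2 * Fintype.card κ) := by
  classical
  set R := Set.range (Sum.elim f g)
  let T : Finset (κ → Bool × Bool) := Fintype.piFinset fun _ => {(true, true)}ᶜ
  let restrict (s : ι → Bool) : (κ → Bool × Bool) × (↥(Rᶜ) → Bool) :=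
    (fun k => (s (f k), s (g k)), fun x => s x)
  have hrestrict : Injective restrict := by
    intro s s' h
    simp only [restrict, Prod.mk.injEq, funext_iff] at h
    funext x
    by_cases hx : x ∈ R
    · obtain ⟨k | k, rfl⟩ := hx
      · exact (h.1 k).1
      · exact (h.1 k).2
    · exact h.2 ⟨x, hx⟩
  have hRc : Fintype.card ↥(Rᶜ) = Fintype.card ι - 2 * Fintype.card κ := by
    rw [Fintype.card_compl_set, Set.card_range_of_injective hfg, Fintype.card_sum, two_mul]
  calc _ ≤ #(T ×ˢ (univ : Finset (↥(Rᶜ) → Bool))) := by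
        refine card_le_card_of_injOn restrict (fun s hs => ?_) hrestrict.injOn
        simp only [coe_filter, Set.mem_ofPred_eq] at hs
        simpa [T, restrict] using hs
    _ = _ := by simp [T, hRc, card_compl]

theorem card_filter_forall_not_and_div_le (f g : κ → ι) (hfg : Injective (Sum.elim f g)) :
    (#{s : ι → Bool | ∀ k, ¬(s (f k) = true ∧ s (g k) = true)} : ℝ) /
      #(univ : Finset (ι → Bool)) ≤ (3 / 4) ^ Fintype.card κ := by
  have h2k : 2 * Fintype.card κ ≤ Fintype.card ι := by
    simpa [two_mul] using Fintype.card_le_of_injective _ hfg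
  rw [card_univ, Fintype.card_fun, Fintype.card_bool, div_le_iff₀ (by positivity)]
  calc _ ≤ ((3 ^ Fintype.card κ * 2 ^ (Fintype.card ι - 2 * Fintype.card κ) : ℕ) : ℝ) :=
        mod_cast card_filter_forall_not_and_le f g hfg
    _ = _ := by
      rw [← Nat.add_sub_cancel' h2k]
      push_cast
      rw [Nat.add_sub_cancel_left, pow_add, pow_mul, div_pow]
      field_simp
      norm_num

end SignPairs

section Halving

variable {α : Type*} [DecidableEq α] {S : Finset α} {m : ℕ} {z : α}

theorem card_sdiff_of_card_eq_two_mul (hS : #S = 2 * m) {I : Finset α} (hIS : I ⊆ S)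
    (hI : #I = m) : #(S \ I) = m := by
  rw [card_sdiff_of_subset hIS, hS, hI]
  omega

theorem two_mul_card_filter_mem_powersetCard (hS : #S = 2 * m) (hz : z ∈ S) :
    2 * #{I ∈ S.powersetCard m | z ∈ I} = (2 * m).choose m := by
  have hswap : #{I ∈ S.powersetCard m | z ∈ I} = #{I ∈ S.powersetCard m | z ∉ I} := by
    refine card_nbij' (S \ ·) (S \ ·) (fun I hI => ?_) (fun I hI => ?_) (fun I hI => ?_)
      (fun I hI => ?_) <;>
    simp only [coe_filter, Set.mem_ofPred_eq, mem_powersetCard] at hI ⊢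
    · exact ⟨⟨sdiff_subset, card_sdiff_of_card_eq_two_mul hS hI.1.1 hI.1.2⟩,
        fun h => (mem_sdiff.1 h).2 hI.2⟩
    · exact ⟨⟨sdiff_subset, card_sdiff_of_card_eq_two_mul hS hI.1.1 hI.1.2⟩,
        mem_sdiff.2 ⟨hz, hI.2⟩⟩
    · exact Finset.sdiff_sdiff_eq_self hI.1.1
    · exact Finset.sdiff_sdiff_eq_self hI.1.1
  rw [two_mul]
  nth_rw 2 [hswap]
  rw [card_filter_add_card_filter_not, card_powersetCard, hS]

end Halving

open scoped Classical

/-- Signs are `Bool`s, with `+` encoded as `true`. -/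
theorem stmt10_general (n m : ℕ) (hm : 2 ≤ m) (h2m : 2 * m ≤ n) :
    ((Finset.univ.filter
        (fun s : {I : Finset (Fin n) // I.card = m} → Bool =>
          ¬ ∃ I₁ I₂ : {I : Finset (Fin n) // I.card = m},
            Disjoint I₁.1 I₂.1 ∧
            I₁.1 ∪ I₂.1 = Finset.univ.filter (fun i : Fin n => (i : ℕ) < 2 * m) ∧
            s I₁ = true ∧ s I₂ = true)).card : ℝ) /
      ((Finset.univ : Finset ({I : Finset (Fin n) // I.card = m} → Bool)).card : ℝ)
      ≤ (3 / 4 : ℝ) ^ (Nat.choose (2 * m) m / 2) := by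
  set S : Finset (Fin n) := univ.filter (fun i : Fin n => (i : ℕ) < 2 * m)
  have hS : #S = 2 * m := by rw [Fin.card_filter_val_lt]; omega
  set z : Fin n := ⟨0, by omega⟩
  have hz : z ∈ S := by simp [S, z]; omega
  set K := {I ∈ S.powersetCard m | z ∈ I}
  have hK (I : K) : (I.1 ⊆ S ∧ #I.1 = m) ∧ z ∈ I.1 := by
    simpa only [K, mem_filter, mem_powersetCard] using I.2
  let f (I : K) : {I : Finset (Fin n) // #I = m} := ⟨I, (hK I).1.2⟩
  let g (I : K) : {I : Finset (Fin n) // #I = m} :=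
    ⟨S \ I, card_sdiff_of_card_eq_two_mul hS (hK I).1.1 (hK I).1.2⟩
  have hfg : Injective (Sum.elim f g) := by
    refine Injective.sumElim (fun I J h => Subtype.ext (by simpa [f] using h))
      (fun I J h => Subtype.ext ?_) (fun I J h => ?_)
    · rw [← Finset.sdiff_sdiff_eq_self (hK I).1.1, ← Finset.sdiff_sdiff_eq_self (hK J).1.1]
      exact congrArg (S \ ·) (congrArg Subtype.val h)
    · have hIJ : I.1 = S \ J.1 := congrArg Subtype.val h
      exact (mem_sdiff.1 (hIJ ▸ (hK I).2)).2 (hK J).2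
  calc _ ≤ (#{s : {I : Finset (Fin n) // #I = m} → Bool |
          ∀ k, ¬(s (f k) = true ∧ s (g k) = true)} : ℝ) /
        #(univ : Finset ({I : Finset (Fin n) // #I = m} → Bool)) := by
        gcongr with s
        exact fun hs k hk => hs ⟨f k, g k, disjoint_sdiff, union_sdiff_of_subset (hK k).1.1, hk⟩
    _ ≤ (3 / 4) ^ Fintype.card K := card_filter_forall_not_and_div_le f g hfg
    _ = _ := by
      have hKcard : 2 * #K = (2 * m).choose m := two_mul_card_filter_mem_powersetCard hS hz
      rw [Fintype.card_coe]
      congr 1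
      omega

/-- Probabilistic estimate (Corollary 3.7): fix `4 ≤ n`, `2 ≤ m ≤ n - 2`, `2m ≤ n`.
Assign to each `m`-element subset `I ⊆ {1,...,n}` an independent uniformly random sign
`s(I) ∈ {+,-}` (modelled by counting: the uniform measure on all functions
`s : {I : Finset (Fin n) // I.card = m} → Bool`, with `+` as `true`).  Let
`M := (1/2) · binomial(2m, m)`.  Then the probability that there is NO partition
`{1,...,2m} = I₁ ⊔ I₂` into two `m`-element sets with `s(I₁) = s(I₂) = +` is at most
`(3/4)^M`. -/
theorem stmt10 (n m : ℕ) (hn : 4 ≤ n) (hm : 2 ≤ m) (hmn : m ≤ n - 2) (h2m : 2 * m ≤ n) :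
    ((Finset.univ.filter
        (fun s : {I : Finset (Fin n) // I.card = m} → Bool =>
          ¬ ∃ I₁ I₂ : {I : Finset (Fin n) // I.card = m},
            Disjoint I₁.1 I₂.1 ∧
            I₁.1 ∪ I₂.1 = Finset.univ.filter (fun i : Fin n => (i : ℕ) < 2 * m) ∧
            s I₁ = true ∧ s I₂ = true)).card : ℝ) /
      ((Finset.univ : Finset ({I : Finset (Fin n) // I.card = m} → Bool)).card : ℝ)
      ≤ (3 / 4 : ℝ) ^ (Nat.choose (2 * m) m / 2) :=
  stmt10_general n m hm h2m
end

section
/- Let θ' ∈ ℤ^6 with coordinates indexed by {x,1,2,3,4,y} and let Φ = {β_{i,j} = e_x + e_i + e_j : 1 ≤ i < j ≤ 4}. Define s_{θ'} : Φ → {+,0,-} by the sign of θ'·β. Then for any partition {1,2,3,4} = {i,j} ⊔ {k,ℓ}, it is impossible that s_{θ'}(β_{i,j}) = s_{θ'}(β_{k,ℓ}) = + while s_{θ'}(β_{i,k}) = s_{θ'}(β_{j,ℓ}) = -; consequently the number of functions s : Φ → {+,-} realizable as s_{θ'} for some θ' is at most 64 − 18 = 46. -/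
open scoped Classical

/-!
Since `β_{i,j} + β_{k,ℓ} = 2 e_x + e_1 + e_2 + e_3 + e_4` for every partition
`{1,2,3,4} = {i,j} ⊔ {k,ℓ}`, the values `θ'·β` on two complementary pairs have the same sum for
each of the three partitions. So no `θ'` is positive on both pairs of one partition and negative
on both pairs of another. A direct count shows that exactly `18` of the `64` sign functions contain
such a pattern.
-/

/-- Standard basis vector in `ℤ^6`, coordinates indexed by `{x,1,2,3,4,y} = Fin 6`. -/
def e6 (v : Fin 6) : Fin 6 → ℤ := Pi.single v 1

def dot6 (θ β : Fin 6 → ℤ) : ℤ := ∑ v, θ v * β v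

/-- `β_p := e_x + Σ_{v ∈ p} e_v` for a two-element subset `p ⊆ {1,2,3,4}`. -/
def βof (p : Finset (Fin 6)) : Fin 6 → ℤ := e6 0 + ∑ v ∈ p, e6 v

theorem not_pos_pos_neg_neg_of_add_eq {α : Type*} [AddCommMonoid α] [PartialOrder α]
    [IsOrderedCancelAddMonoid α] {a b c d : α} (h : a + b = c + d) :
    ¬ (0 < a ∧ 0 < b ∧ c < 0 ∧ d < 0) := by
  rintro ⟨ha, hb, hc, hd⟩
  exact (add_neg hc hd).not_gt (h ▸ add_pos ha hb)

theorem dot6_eq_dotProduct (θ β : Fin 6 → ℤ) : dot6 θ β = θ ⬝ᵥ β := rfl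

theorem dot6_exchange (θ : Fin 6 → ℤ) (i j k l : Fin 6) :
    dot6 θ (e6 0 + e6 i + e6 j) + dot6 θ (e6 0 + e6 k + e6 l) =
      dot6 θ (e6 0 + e6 i + e6 k) + dot6 θ (e6 0 + e6 j + e6 l) := by
  simp only [dot6_eq_dotProduct, dotProduct_add]
  ring

theorem dot6_βof (θ : Fin 6 → ℤ) (p : Finset (Fin 6)) :
    dot6 θ (βof p) = θ 0 + ∑ v ∈ p, θ v := by
  simp only [βof, e6, dot6_eq_dotProduct, dotProduct_add, dotProduct_sum, dotProduct_single_one]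

/-- The set `Φ`, with `β_{i,j}` represented by the pair `{i, j}`. -/
abbrev Pair := {p : Finset (Fin 6) // p.card = 2 ∧ p ⊆ ({1, 2, 3, 4} : Finset (Fin 6))}

def Pair.compl (p : Pair) : Pair :=
  ⟨{1, 2, 3, 4} \ p.1, by rw [Finset.card_sdiff_of_subset p.2.2, p.2.1]; rfl, Finset.sdiff_subset⟩

theorem dot6_βof_add_βof_compl (θ : Fin 6 → ℤ) (p : Pair) :
    dot6 θ (βof p.1) + dot6 θ (βof p.compl.1) = 2 * θ 0 + ∑ v ∈ {1, 2, 3, 4}, θ v := by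
  rw [dot6_βof, dot6_βof, ← Finset.sum_sdiff p.2.2]
  simp only [Pair.compl]
  ring

def IsRealizable (s : Pair → Bool) : Prop :=
  ∃ θ' : Fin 6 → ℤ, ∀ p : Pair,
    (s p = true → 0 < dot6 θ' (βof p.1)) ∧ (s p = false → dot6 θ' (βof p.1) < 0)

def HasForbiddenPattern (s : Pair → Bool) : Prop :=
  ∃ p u : Pair, s p = true ∧ s p.compl = true ∧ s u = false ∧ s u.compl = false

instance : DecidablePred HasForbiddenPattern := by
  unfold HasForbiddenPattern
  infer_instance

theorem IsRealizable.not_hasForbiddenPattern {s : Pair → Bool} (hs : IsRealizable s) :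
    ¬ HasForbiddenPattern s := by
  obtain ⟨θ, hθ⟩ := hs
  rintro ⟨p, u, hp, hpc, hu, huc⟩
  refine not_pos_pos_neg_neg_of_add_eq ?_
    ⟨(hθ p).1 hp, (hθ p.compl).1 hpc, (hθ u).2 hu, (hθ u.compl).2 huc⟩
  rw [dot6_βof_add_βof_compl, dot6_βof_add_βof_compl]

theorem card_filter_hasForbiddenPattern :
    (Finset.univ.filter HasForbiddenPattern).card = 18 := by
  decide

theorem card_filter_not_hasForbiddenPattern :
    (Finset.univ.filter fun s => ¬ HasForbiddenPattern s).card = 46 := by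
  have hcard : Fintype.card (Pair → Bool) = 64 := by
    rw [Fintype.card_fun, Fintype.card_bool]
    rfl
  have := Finset.card_filter_add_card_filter_not (s := Finset.univ) HasForbiddenPattern
  rw [card_filter_hasForbiddenPattern, Finset.card_univ, hcard] at this
  omega

/-- No `θ'` realizes the forbidden sign pattern `s_{θ'}(β_{i,j}) = s_{θ'}(β_{k,ℓ}) = +`,
`s_{θ'}(β_{i,k}) = s_{θ'}(β_{j,ℓ}) = -` (signs via `Int.sign` of the dot product), for any
partition `{1,2,3,4} = {i,j} ⊔ {k,ℓ}`; consequently at most `64 − 18 = 46` of the `64`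
functions `s : Φ → {+,-}` are realizable as `s_{θ'}` for some `θ'`. -/
theorem stmt17 :
    (∀ θ' : Fin 6 → ℤ, ∀ i j k l : Fin 6,
      ({i, j, k, l} : Set (Fin 6)) = {1, 2, 3, 4} →
      (i ≠ j ∧ i ≠ k ∧ i ≠ l ∧ j ≠ k ∧ j ≠ l ∧ k ≠ l) →
      ¬ ((dot6 θ' (e6 0 + e6 i + e6 j)).sign = 1 ∧ (dot6 θ' (e6 0 + e6 k + e6 l)).sign = 1 ∧
         (dot6 θ' (e6 0 + e6 i + e6 k)).sign = -1 ∧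
         (dot6 θ' (e6 0 + e6 j + e6 l)).sign = -1)) ∧
    (Finset.univ.filter
      (fun s : {p : Finset (Fin 6) // p.card = 2 ∧ p ⊆ ({1, 2, 3, 4} : Finset (Fin 6))} → Bool =>
        ∃ θ' : Fin 6 → ℤ,
          ∀ p : {p : Finset (Fin 6) // p.card = 2 ∧ p ⊆ ({1, 2, 3, 4} : Finset (Fin 6))},
            (s p = true → 0 < dot6 θ' (βof p.1)) ∧
            (s p = false → dot6 θ' (βof p.1) < 0))).card ≤ 46 := by
  refine ⟨fun θ i j k l _ _ => ?_, ?_⟩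
  · simp only [Int.sign_eq_one_iff_pos, Int.sign_eq_neg_one_iff_neg]
    exact not_pos_pos_neg_neg_of_add_eq (dot6_exchange θ i j k l)
  · rw [← card_filter_not_hasForbiddenPattern]
    exact Finset.card_le_card
      (Finset.monotone_filter_right _ fun _ _ hs => IsRealizable.not_hasForbiddenPattern hs)
end
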